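/- Let j ≥ 0 be an integer, n = 2j+1, and let ϑ_k = 2π(k−1)/n for k = 1, …, n, and let ω ∈ ℝ. Define the n × n complex matrix Ω by Ω_{ik} = (1/n) · Σ_{m=−j}^{j} exp(i m (ϑ_k − ϑ_i − ω)). Then Ω is unitary: Ω Ω* = I, where Ω* is the conjugate transpose. -/

import Mathlib

open Complex Finset

lemma geo_sum (n : ℕ) (hn : n ≠ 0) (t : ℤ) :
    ∑ l ∈ range n, Complex.exp ((t : ℂ) * (2 * Real.pi * Complex.I / n)) ^ l
      = if (n : ℤ) ∣ t then (n : ℂ) else 0 := by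
  have h := Complex.isPrimitiveRoot_exp n hn
  have hnc : (n : ℂ) ≠ 0 := Nat.cast_ne_zero.mpr hn
  have hz : Complex.exp ((t : ℂ) * (2 * Real.pi * Complex.I / n))
      = Complex.exp (2 * Real.pi * Complex.I / n) ^ t := Complex.exp_int_mul _ t
  by_cases hd : (n : ℤ) ∣ t
  · rw [hz, (h.zpow_eq_one_iff_dvd t).mpr hd]
    simp [hd]
  · have hne1 : Complex.exp ((t:ℂ) * (2*Real.pi*Complex.I/n)) ≠ 1 := by
      rw [hz]; exact fun hc => hd ((h.zpow_eq_one_iff_dvd t).mp hc)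
    have hpow : Complex.exp ((t:ℂ) * (2*Real.pi*Complex.I/n)) ^ n = 1 := by
      rw [← Complex.exp_nat_mul]
      have e1 : (n : ℂ) * ((t:ℂ) * (2*Real.pi*Complex.I/n)) = (t:ℂ) * (2*Real.pi*Complex.I) := by
        field_simp
      rw [e1, Complex.exp_int_mul, Complex.exp_two_pi_mul_I, one_zpow]
    rw [geom_sum_eq hne1, hpow, if_neg hd]
    simp [hd]

lemma reindex_sum (j : ℕ) (f : ℤ → ℂ) :
    ∑ m ∈ Icc (-(j:ℤ)) (j:ℤ), f m = ∑ l ∈ range (2*j+1), f ((l:ℤ) - j) := by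
  refine Finset.sum_nbij' (fun m => (m + j).toNat) (fun l => (l:ℤ) - j) ?_ ?_ ?_ ?_ ?_
  · intro a ha
    simp only [mem_Icc] at ha
    simp only [mem_range]
    omega
  · intro a ha
    simp only [mem_range] at ha
    simp only [mem_Icc]
    omega
  · intro a ha
    simp only [mem_Icc] at ha
    omega
  · intro a ha
    simp only [mem_range] at ha
    omega
  · intro a ha
    simp only [mem_Icc] at ha
    congr 1
    omega

lemma dirichlet_sum (j : ℕ) (d : ℤ) :
    ∑ m ∈ Icc (-(j:ℤ)) (j:ℤ),
        Complex.exp (((m * d : ℤ) : ℂ) * (2 * Real.pi * Complex.I / (2*j+1 : ℕ)))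
      = if ((2*j+1 : ℕ) : ℤ) ∣ d then ((2*j+1 : ℕ) : ℂ) else 0 := by
  set n : ℕ := 2*j+1 with hn
  have hn0 : n ≠ 0 := by omega
  by_cases hd : (n : ℤ) ∣ d
  · rw [if_pos hd]
    obtain ⟨e, he⟩ := hd
    have : ∀ m ∈ Icc (-(j:ℤ)) (j:ℤ),
        Complex.exp (((m * d : ℤ) : ℂ) * (2 * Real.pi * Complex.I / (n : ℕ))) = 1 := by
      intro m _
      have e1 : ((m * d : ℤ) : ℂ) * (2 * Real.pi * Complex.I / (n : ℕ))
          = ((m * e : ℤ) : ℂ) * (2 * Real.pi * Complex.I) := by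
        have hnc : ((n:ℕ) : ℂ) ≠ 0 := Nat.cast_ne_zero.mpr hn0
        field_simp
        push_cast [he]
        ring
      rw [e1, Complex.exp_int_mul, Complex.exp_two_pi_mul_I, one_zpow]
    rw [Finset.sum_congr rfl this, Finset.sum_const, Int.card_Icc]
    have : ((j:ℤ) + 1 - -(j:ℤ)).toNat = n := by omega
    rw [this]
    simp
  · rw [if_neg hd]
    rw [reindex_sum]
    have : ∀ l ∈ range n,
        Complex.exp (((((l:ℤ) - j) * d : ℤ) : ℂ) * (2 * Real.pi * Complex.I / (n : ℕ)))
          = Complex.exp (((-(j:ℤ) * d : ℤ) : ℂ) * (2 * Real.pi * Complex.I / (n : ℕ)))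
            * Complex.exp (((d : ℤ) : ℂ) * (2 * Real.pi * Complex.I / (n : ℕ))) ^ l := by
      intro l _
      rw [← Complex.exp_nat_mul, ← Complex.exp_add]
      congr 1
      push_cast
      ring
    rw [Finset.sum_congr rfl this, ← Finset.mul_sum, geo_sum n hn0 d, if_neg hd, mul_zero]

/-- The matrix of the rotation by `ω` in the Dirichlet-kernel
basis on the uniform grid `ϑ_k = 2π(k−1)/n`, `n = 2j+1`, with entries
`Ω_{ik} = (1/n) Σ_{m=−j}^{j} exp(i m (ϑ_k − ϑ_i − ω))`, is unitary. -/
theorem dirichlet_rotation_matrix_unitary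
    (j : ℕ) (ω : ℝ)
    (Ω : Matrix (Fin (2 * j + 1)) (Fin (2 * j + 1)) ℂ)
    (hΩ : ∀ i k : Fin (2 * j + 1),
      Ω i k = (1 / (2 * j + 1) : ℂ) *
        ∑ m ∈ Finset.Icc (-(j : ℤ)) (j : ℤ),
          Complex.exp (Complex.I * (m : ℂ) *
            ((2 * Real.pi * (k : ℕ) / (2 * j + 1)
              - 2 * Real.pi * (i : ℕ) / (2 * j + 1) - ω : ℝ) : ℂ))) :
    Ω * Ω.conjTranspose = 1 := by
  have hn0 : (2*j+1 : ℕ) ≠ 0 := by omega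
  have hnc : ((2*j+1 : ℕ) : ℂ) ≠ 0 := Nat.cast_ne_zero.mpr hn0
  have hcast : ((2*j+1 : ℕ) : ℂ) = 2*(j:ℂ)+1 := by push_cast; ring
  set c : ℂ := 2 * Real.pi * Complex.I / ((2*j+1 : ℕ) : ℂ) with hc
  ext i k
  rw [Matrix.mul_apply, Matrix.one_apply]
  have hstar : ∀ (t m : ℤ), star (Complex.exp ((t:ℂ)*c + Complex.I*(m:ℂ)*(-(ω:ℂ))))
      = Complex.exp (((-t : ℤ):ℂ)*c + Complex.I*(m:ℂ)*(ω:ℂ)) := by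
    intro t m
    rw [Complex.star_def, ← Complex.exp_conj]
    congr 1
    simp only [hc, map_add, map_mul, map_div₀, map_neg, Complex.conj_I,
      Complex.conj_ofReal, map_intCast, map_natCast, map_ofNat]
    push_cast
    ring
  have hE : ∀ (a b : Fin (2*j+1)) (m : ℤ),
      Complex.I * (m:ℂ) * ((2 * Real.pi * (b:ℕ) / (2*j+1)
          - 2 * Real.pi * (a:ℕ) / (2*j+1) - ω : ℝ) : ℂ)
        = ((m*((b:ℤ)-(a:ℤ)) : ℤ):ℂ) * c + Complex.I*(m:ℂ)*(-(ω:ℂ)) := by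
    intro a b m
    rw [hc]
    push_cast
    ring
  have key : ∀ l : Fin (2*j+1), Ω i l * star (Ω k l)
      = (1/(2*(j:ℂ)+1)) * (1/(2*(j:ℂ)+1)) *
        ∑ m ∈ Finset.Icc (-(j:ℤ)) (j:ℤ), ∑ m' ∈ Finset.Icc (-(j:ℤ)) (j:ℤ),
          (Complex.exp (((m - m' : ℤ):ℂ) * c) ^ (l : ℕ)) *
            (Complex.exp (((m'*(k:ℤ) - m*(i:ℤ) : ℤ):ℂ) * c) *
              Complex.exp (Complex.I * (((m - m' : ℤ)):ℂ) * (-(ω:ℂ)))) := by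
    intro l
    rw [hΩ i l, hΩ k l, star_mul']
    have h1 : star ((1 : ℂ) / (2*(j:ℂ)+1)) = 1 / (2*(j:ℂ)+1) := by
      simp [Complex.star_def, map_div₀]
    rw [h1, star_sum, mul_mul_mul_comm, Finset.sum_mul_sum]
    congr 1
    refine Finset.sum_congr rfl fun m hm => ?_
    refine Finset.sum_congr rfl fun m' hm' => ?_
    rw [hE i l m, hE k l m', hstar, ← Complex.exp_add, ← Complex.exp_nat_mul,
      ← Complex.exp_add, ← Complex.exp_add]
    congr 1
    push_cast
    ring
  simp only [Matrix.conjTranspose_apply, key]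
  rw [← Finset.mul_sum, Finset.sum_comm]
  have inner : ∀ m ∈ Finset.Icc (-(j:ℤ)) (j:ℤ),
      (∑ l : Fin (2*j+1), ∑ m' ∈ Finset.Icc (-(j:ℤ)) (j:ℤ),
          (Complex.exp (((m - m' : ℤ):ℂ) * c) ^ (l : ℕ)) *
            (Complex.exp (((m'*(k:ℤ) - m*(i:ℤ) : ℤ):ℂ) * c) *
              Complex.exp (Complex.I * (((m - m' : ℤ)):ℂ) * (-(ω:ℂ)))))
        = ((2*j+1 : ℕ):ℂ) * Complex.exp (((m*((k:ℤ)-(i:ℤ)) : ℤ):ℂ) * c) := by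
    intro m hm
    rw [Finset.sum_comm]
    have hl : ∀ m' : ℤ,
        (∑ l : Fin (2*j+1), (Complex.exp (((m - m' : ℤ):ℂ) * c) ^ (l : ℕ)) *
            (Complex.exp (((m'*(k:ℤ) - m*(i:ℤ) : ℤ):ℂ) * c) *
              Complex.exp (Complex.I * (((m - m' : ℤ)):ℂ) * (-(ω:ℂ)))))
          = (if ((2*j+1 : ℕ):ℤ) ∣ (m - m') then ((2*j+1 : ℕ):ℂ) else 0) *
            (Complex.exp (((m'*(k:ℤ) - m*(i:ℤ) : ℤ):ℂ) * c) *
              Complex.exp (Complex.I * (((m - m' : ℤ)):ℂ) * (-(ω:ℂ)))) := by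
      intro m'
      rw [← Finset.sum_mul,
        Fin.sum_univ_eq_sum_range (fun x => Complex.exp (((m - m' : ℤ):ℂ) * c) ^ x),
        hc, geo_sum _ hn0]
    simp only [hl]
    rw [Finset.sum_eq_single_of_mem m hm]
    · rw [if_pos (by simp : ((2*j+1 : ℕ):ℤ) ∣ (m - m))]
      have h2 : Complex.exp (Complex.I * (((m - m : ℤ)):ℂ) * (-(ω:ℂ))) = 1 := by
        simp
      rw [h2, mul_one]
      congr 2
      push_cast
      ring
    · intro b hb hbm
      rw [if_neg, zero_mul]
      intro hdvd
      have hb' := Finset.mem_Icc.mp hb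
      have hm' := Finset.mem_Icc.mp hm
      have : m - b = 0 := by
        refine Int.eq_zero_of_abs_lt_dvd hdvd ?_
        rw [abs_lt]
        push_cast
        omega
      omega
  rw [Finset.sum_congr rfl inner, ← Finset.mul_sum, dirichlet_sum j ((k:ℤ)-(i:ℤ))]
  by_cases hik : i = k
  · rw [if_pos hik, if_pos (by rw [hik]; simp)]
    rw [hcast]
    have h2 : (2*(j:ℂ)+1) ≠ 0 := hcast ▸ hnc
    field_simp
  · rw [if_neg hik, if_neg, mul_zero, mul_zero]
    intro hdvd
    have hki : ((k:ℤ) - (i:ℤ)) = 0 := by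
      refine Int.eq_zero_of_abs_lt_dvd hdvd ?_
      have h1 := i.isLt
      have h2 := k.isLt
      rw [abs_lt]
      push_cast
      omega
    exact hik (Fin.ext (by omega))
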